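/- (ReLU network prediction error) Under the assumptions of the soft-thresholding lemma, with w ∈ ℝ^m satisfying ‖w‖_∞ = 1 and Y = ⟨w, z⟩, the estimator Ŷ = ⟨w, ρ_τ^{⊗m}(Aᵀx)⟩ satisfies, with high probability, (Ŷ − Y)² ≤ k²·‖ẑ − z‖_∞² = O(k²((1+μ)σ²log m + μ²M²)). -/

import Mathlib

/-!
Each coordinate `(Aᵀξ)ⱼ` of the back-projected noise is sub-Gaussian with variance
proxy `σ²(1 + μ)`, so with `C = 3` a Chernoff bound gives
`P(|(Aᵀξ)ⱼ| > 3σ√((1+μ) log m)) ≤ 2m^{-9/2}`, and a union bound over the `m` coordinates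
leaves probability at least `1 - 1/m`. On that event, incoherence bounds the cross-talk
`|((AᵀA - 1)z)ⱼ| ≤ μ‖z‖₁ ≤ μM`, so `Aᵀx` lies within the threshold `τ` of `z` in every
coordinate. Soft thresholding at `τ` then vanishes off `supp z` and moves every coordinate by
at most `τ`, hence `‖ẑ - z‖_∞ ≤ 2τ`, and Hölder's inequality on the `k`-element support gives
`|Ŷ - Y| ≤ k ‖ẑ - z‖_∞`.
-/

open Matrix MeasureTheory ProbabilityTheory NNReal

namespace ProbabilityTheory.HasSubgaussianMGF

variable {Ω : Type*} {mΩ : MeasurableSpace Ω} {μ : Measure Ω} {X : Ω → ℝ} {c : ℝ≥0}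

lemma mono (h : HasSubgaussianMGF X c μ) {c' : ℝ≥0} (hc : c ≤ c') :
    HasSubgaussianMGF X c' μ where
  integrable_exp_mul := h.integrable_exp_mul
  mgf_le t := (h.mgf_le t).trans <| Real.exp_le_exp.2 <| by gcongr

lemma measureReal_abs_ge_le [IsFiniteMeasure μ] (h : HasSubgaussianMGF X c μ) {ε : ℝ}
    (hε : 0 ≤ ε) :
    μ.real {ω | ε ≤ |X ω|} ≤ 2 * Real.exp (-ε ^ 2 / (2 * c)) := by
  have hsplit : {ω | ε ≤ |X ω|} = {ω | ε ≤ X ω} ∪ {ω | ε ≤ (-X) ω} := by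
    ext ω
    simp only [Set.mem_ofPred_eq, Set.mem_union, Pi.neg_apply, le_abs', le_neg, or_comm]
  calc μ.real {ω | ε ≤ |X ω|}
      ≤ μ.real {ω | ε ≤ X ω} + μ.real {ω | ε ≤ (-X) ω} :=
        hsplit ▸ measureReal_union_le _ _
    _ ≤ 2 * Real.exp (-ε ^ 2 / (2 * c)) := by
      linarith [h.measure_ge_le hε, h.neg.measure_ge_le hε]

end ProbabilityTheory.HasSubgaussianMGF

lemma hasSubgaussianMGF_gaussianReal (v : ℝ≥0) :
    HasSubgaussianMGF id v (gaussianReal 0 v) where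
  integrable_exp_mul := integrable_exp_mul_gaussianReal
  mgf_le t := by simp [mgf_id_gaussianReal]

lemma hasSubgaussianMGF_const_mul_gaussianReal (v : ℝ≥0) (a : ℝ) :
    HasSubgaussianMGF (a * ·) (‖a‖₊ ^ 2 * v) (gaussianReal 0 v) := by
  rw [← HasSubgaussianMGF.id_map_iff (by fun_prop), gaussianReal_map_const_mul, mul_zero]
  convert hasSubgaussianMGF_gaussianReal _ using 2
  ext; simp

lemma hasSubgaussianMGF_sum_mul_pi_gaussianReal {ι : Type*} [Fintype ι] (v : ℝ≥0)
    (a : ι → ℝ) :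
    HasSubgaussianMGF (fun ξ : ι → ℝ => ∑ i, a i * ξ i) (∑ i, ‖a i‖₊ ^ 2 * v)
      (Measure.pi fun _ => gaussianReal 0 v) := by
  refine HasSubgaussianMGF.sum_of_iIndepFun
    (iIndepFun_pi (X := fun i (x : ℝ) => a i * x) fun i => by fun_prop) fun i _ => ?_
  have := hasSubgaussianMGF_const_mul_gaussianReal v (a i)
  rw [← (measurePreserving_eval (fun _ : ι => gaussianReal 0 v) i).map_eq] at this
  exact this.of_map (measurable_pi_apply i).aemeasurable

lemma one_sub_le_measureReal_forall_abs_le {Ω ι : Type*} {mΩ : MeasurableSpace Ω}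
    {μ : Measure Ω} [IsProbabilityMeasure μ] [Fintype ι] {X : ι → Ω → ℝ} {c : ℝ≥0}
    (h : ∀ j, HasSubgaussianMGF (X j) c μ) {ε : ℝ} (hε : 0 ≤ ε) :
    1 - 2 * Fintype.card ι * Real.exp (-ε ^ 2 / (2 * c))
      ≤ μ.real {ω | ∀ j, |X j ω| ≤ ε} := by
  have hcompl : {ω | ∀ j, |X j ω| ≤ ε}ᶜ ⊆ ⋃ j, {ω | ε ≤ |X j ω|} := by
    intro ω hω
    simp only [Set.mem_compl_iff, Set.mem_ofPred_eq, not_forall, not_le] at hω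
    obtain ⟨j, hj⟩ := hω
    exact Set.mem_iUnion.2 ⟨j, hj.le⟩
  have hunion :
      μ.real {ω | ∀ j, |X j ω| ≤ ε}ᶜ ≤ Fintype.card ι * (2 * Real.exp (-ε ^ 2 / (2 * c))) :=
    calc μ.real {ω | ∀ j, |X j ω| ≤ ε}ᶜ ≤ ∑ j, μ.real {ω | ε ≤ |X j ω|} :=
          (measureReal_mono hcompl).trans (measureReal_iUnion_fintype_le _)
      _ ≤ ∑ _j : ι, 2 * Real.exp (-ε ^ 2 / (2 * c)) :=
          Finset.sum_le_sum fun j _ => (h j).measureReal_abs_ge_le hε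
      _ = _ := by rw [Finset.sum_const, Finset.card_univ, nsmul_eq_mul]
  have := measureReal_union_le (μ := μ) {ω | ∀ j, |X j ω| ≤ ε} {ω | ∀ j, |X j ω| ≤ ε}ᶜ
  rw [Set.union_compl_self, probReal_univ] at this
  linarith

lemma exp_neg_nine_halves_mul_log_le {m : ℕ} (hm : 2 ≤ m) :
    2 * m * Real.exp (-(9 / 2 * Real.log m)) ≤ 1 / m := by
  have hm2 : (2 : ℝ) ≤ m := by exact_mod_cast hm
  have hL : 0 ≤ Real.log m := Real.log_nonneg (by linarith)
  have hcube : Real.exp (3 * Real.log m) = (m : ℝ) ^ 3 := by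
    rw [show (3 : ℝ) = (3 : ℕ) by norm_num, Real.exp_nat_mul, Real.exp_log (by positivity)]
  calc 2 * m * Real.exp (-(9 / 2 * Real.log m)) ≤ 2 * m * Real.exp (-(3 * Real.log m)) := by
        gcongr; linarith
    _ = 2 / m * (1 / m) := by rw [Real.exp_neg, hcube]; field_simp
    _ ≤ 1 * (1 / m) := by gcongr; rwa [div_le_one (by positivity)]
    _ = 1 / m := one_mul _

lemma one_sub_inv_le_measure_forall_abs_mulVec_le {n m : ℕ} (hm : 2 ≤ m) (σ : ℝ≥0)
    (A : Matrix (Fin n) (Fin m) ℝ) {μ : ℝ} (hμ : 0 ≤ μ)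
    (hcol : ∀ j, ∑ i, (A i j) ^ 2 ≤ 1 + μ) :
    ENNReal.ofReal (1 - 1 / (m : ℝ)) ≤
      (Measure.pi fun _ : Fin n => gaussianReal 0 (σ ^ 2))
        {ξ | ∀ j, |(Aᵀ *ᵥ ξ) j| ≤ 3 * σ * Real.sqrt ((1 + μ) * Real.log m)} := by
  set P := Measure.pi fun _ : Fin n => gaussianReal 0 (σ ^ 2)
  set ε := 3 * σ * Real.sqrt ((1 + μ) * Real.log m)
  have hsubG :
      ∀ j, HasSubgaussianMGF (fun ξ => (Aᵀ *ᵥ ξ) j) ((1 + μ).toNNReal * σ ^ 2) P :=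
    fun j => (hasSubgaussianMGF_sum_mul_pi_gaussianReal (σ ^ 2) (fun i => A i j)).mono <| by
      rw [← NNReal.coe_le_coe]
      simp only [NNReal.coe_sum, NNReal.coe_mul, NNReal.coe_pow, coe_nnnorm, Real.norm_eq_abs,
        sq_abs, ← Finset.sum_mul, Real.coe_toNNReal _ (by linarith : 0 ≤ 1 + μ)]
      exact mul_le_mul_of_nonneg_right (hcol j) (by positivity)
  -- For `σ = 0` the Chernoff bound is vacuous (`x / 0 = 0`), but then the noise vanishes a.e.
  rcases eq_or_ne σ 0 with rfl | hσ
  · have hG : ∀ᵐ ξ ∂P, ∀ j, |(Aᵀ *ᵥ ξ) j| ≤ ε := by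
      filter_upwards [ae_all_iff.2 fun j =>
        (by simpa using hsubG j : HasSubgaussianMGF _ 0 P).ae_eq_zero_of_hasSubgaussianMGF_zero]
        with ξ hξ j
      simp [hξ j, ε]
    calc ENNReal.ofReal (1 - 1 / m) ≤ 1 := ENNReal.ofReal_le_one.2 (by simp)
      _ = P {ξ | ∀ j, |(Aᵀ *ᵥ ξ) j| ≤ ε} := by
        rw [measure_congr
          ((ae_eq_univ (s := {ξ | ∀ j, |(Aᵀ *ᵥ ξ) j| ≤ ε})).2 (ae_iff.1 hG)), measure_univ]
  · have hc : (((1 + μ).toNNReal * σ ^ 2 : ℝ≥0) : ℝ) = (1 + μ) * σ ^ 2 := by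
      push_cast; rw [Real.coe_toNNReal _ (by linarith)]
    have hε : ε ^ 2 = 9 * σ ^ 2 * ((1 + μ) * Real.log m) := by
      rw [mul_pow, mul_pow, Real.sq_sqrt (by positivity)]; ring
    have hσ' : (σ : ℝ) ≠ 0 := by exact_mod_cast hσ
    have htail :
        -ε ^ 2 / (2 * ((1 + μ).toNNReal * σ ^ 2 : ℝ≥0)) = -(9 / 2 * Real.log m) := by
      rw [hc, hε]; field_simp
    have hunion := one_sub_le_measureReal_forall_abs_le hsubG (by positivity : 0 ≤ ε)
    rw [htail, Fintype.card_fin] at hunion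
    calc ENNReal.ofReal (1 - 1 / m)
        ≤ ENNReal.ofReal (P.real {ξ | ∀ j, |(Aᵀ *ᵥ ξ) j| ≤ ε}) :=
          ENNReal.ofReal_le_ofReal (by linarith [exp_neg_nine_halves_mul_log_le hm])
      _ = P {ξ | ∀ j, |(Aᵀ *ᵥ ξ) j| ≤ ε} := ofReal_measureReal

noncomputable def softThreshold (τ v : ℝ) : ℝ := Real.sign v * max 0 (|v| - τ)

lemma softThreshold_eq_zero_of_abs_le {τ v : ℝ} (h : |v| ≤ τ) : softThreshold τ v = 0 := by
  rw [softThreshold, max_eq_left (by linarith), mul_zero]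

lemma abs_softThreshold_sub_self_le {τ : ℝ} (hτ : 0 ≤ τ) (v : ℝ) :
    |softThreshold τ v - v| ≤ τ := by
  rcases le_or_gt |v| τ with h | h
  · rw [softThreshold_eq_zero_of_abs_le h, zero_sub, abs_neg]
    exact h
  · rw [softThreshold, max_eq_right (by linarith)]
    rcases lt_trichotomy v 0 with hv | rfl | hv
    · rw [Real.sign_of_neg hv, abs_of_neg hv, abs_le]
      constructor <;> linarith
    · simpa using hτ
    · rw [Real.sign_of_pos hv, abs_of_pos hv, abs_le]
      constructor <;> linarith

lemma abs_softThreshold_sub_le {τ v z : ℝ} (hτ : 0 ≤ τ) (h : |v - z| ≤ τ) :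
    |softThreshold τ v - z| ≤ 2 * τ :=
  calc |softThreshold τ v - z| ≤ |softThreshold τ v - v| + |v - z| := abs_sub_le _ _ _
    _ ≤ 2 * τ := by linarith [abs_softThreshold_sub_self_le hτ v]

lemma abs_sum_mul_le_card_mul_iSup {ι : Type*} [Fintype ι] {w d : ι → ℝ}
    (hw : ∀ i, |w i| ≤ 1) (s : Finset ι) (hd : ∀ i ∉ s, d i = 0) :
    |∑ i, w i * d i| ≤ s.card * ⨆ i, |d i| := by
  have hsum : ∑ i, w i * d i = ∑ i ∈ s, w i * d i :=
    (Finset.sum_subset (Finset.subset_univ s) fun i _ hi => by rw [hd i hi, mul_zero]).symm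
  calc |∑ i, w i * d i| ≤ ∑ i ∈ s, |w i * d i| := hsum ▸ Finset.abs_sum_le_sum_abs _ _
    _ ≤ ∑ _i ∈ s, ⨆ i, |d i| := Finset.sum_le_sum fun i _ => by
        rw [abs_mul]
        exact (mul_le_of_le_one_left (abs_nonneg _) (hw i)).trans
          (le_ciSup (f := fun i => |d i|) (Finite.bddAbove_range _) i)
    _ = s.card * ⨆ i, |d i| := by rw [Finset.sum_const, nsmul_eq_mul]

section SoftThresholdEstimator

variable {ι : Type*} {τ : ℝ} {v z : ι → ℝ}

lemma iSup_abs_softThreshold_sub_le (hτ : 0 ≤ τ) (hdev : ∀ i, |v i - z i| ≤ τ) :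
    ⨆ i, |softThreshold τ (v i) - z i| ≤ 2 * τ :=
  Real.iSup_le (fun i => abs_softThreshold_sub_le hτ (hdev i)) (by positivity)

lemma sq_sum_mul_softThreshold_sub_le [Fintype ι] (hdev : ∀ i, |v i - z i| ≤ τ)
    {w : ι → ℝ} (hw : ∀ i, |w i| ≤ 1) {k : ℕ}
    (hk : (Finset.univ.filter fun i => z i ≠ 0).card ≤ k) :
    (∑ i, w i * softThreshold τ (v i) - ∑ i, w i * z i) ^ 2
      ≤ (k : ℝ) ^ 2 * (⨆ i, |softThreshold τ (v i) - z i|) ^ 2 := by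
  have hsupp :
      ∀ i ∉ Finset.univ.filter fun i => z i ≠ 0, softThreshold τ (v i) - z i = 0 := by
    intro i hi
    simp only [Finset.mem_filter, Finset.mem_univ, true_and, not_not] at hi
    rw [hi, softThreshold_eq_zero_of_abs_le (by simpa [hi] using hdev i), sub_zero]
  have hT : 0 ≤ ⨆ i, |softThreshold τ (v i) - z i| := Real.iSup_nonneg fun _ => abs_nonneg _
  rw [← mul_pow, ← sq_abs, ← Finset.sum_sub_distrib]
  simp_rw [← mul_sub]
  gcongr
  exact (abs_sum_mul_le_card_mul_iSup hw _ hsupp).trans (by gcongr)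

end SoftThresholdEstimator

lemma abs_mulVec_apply_le {ι κ : Type*} [Fintype κ] {B : Matrix ι κ ℝ} {μ : ℝ}
    (hB : ∀ i j, |B i j| ≤ μ) (z : κ → ℝ) (i : ι) : |(B *ᵥ z) i| ≤ μ * ∑ j, |z j| :=
  calc |(B *ᵥ z) i| ≤ ∑ j, |B i j * z j| := Finset.abs_sum_le_sum_abs _ _
    _ ≤ ∑ j, μ * |z j| := Finset.sum_le_sum fun j _ => by
        rw [abs_mul]; exact mul_le_mul_of_nonneg_right (hB i j) (abs_nonneg _)
    _ = μ * ∑ j, |z j| := (Finset.mul_sum _ _ _).symm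

lemma transpose_mulVec_mulVec_add_sub {n m : Type*} [Fintype n] [Fintype m] [DecidableEq m]
    (A : Matrix n m ℝ) (z : m → ℝ) (ξ : n → ℝ) :
    Aᵀ *ᵥ (A *ᵥ z + ξ) - z = (Aᵀ * A - 1) *ᵥ z + Aᵀ *ᵥ ξ := by
  rw [mulVec_add, mulVec_mulVec, sub_mulVec, one_mulVec]
  abel

lemma abs_transpose_mulVec_mulVec_add_apply_sub_le {n m : Type*} [Fintype n] [Fintype m]
    [DecidableEq m] {A : Matrix n m ℝ} {μ : ℝ} (hinc : ∀ i j, |(Aᵀ * A - 1 : Matrix m m ℝ) i j| ≤ μ)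
    (z : m → ℝ) (ξ : n → ℝ) (j : m) :
    |(Aᵀ *ᵥ (A *ᵥ z + ξ)) j - z j| ≤ μ * ∑ l, |z l| + |(Aᵀ *ᵥ ξ) j| := by
  rw [← Pi.sub_apply, transpose_mulVec_mulVec_add_sub, Pi.add_apply]
  exact (abs_add_le _ _).trans (add_le_add_left (abs_mulVec_apply_le hinc z j) _)

/-- ReLU network prediction error: in the setting of the soft-thresholding lemma
(`A` being `μ`-incoherent `n × m` with column norms² at most `1+μ`, `z` a `k`-sparse
vector with `‖z‖₁ ≤ M`, `x = Az + ξ`, `ξ ~ N(0, σ²I)`, `‖w‖_∞ = 1`, `Y = ⟨w, z⟩`,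
`τ = C(σ√((1+μ) log m) + μM)` and `ẑ = ρ_τ^{⊗m}(Aᵀx)`, `Ŷ = ⟨w, ẑ⟩`), with
probability at least `1 − 1/m` one has
`(Ŷ − Y)² ≤ k² ‖ẑ − z‖_∞²` and `(Ŷ − Y)² ≤ C' k² ((1+μ) σ² log m + μ² M²)`. -/
theorem relu_network_prediction_error :
    ∃ C C' : ℝ, 0 < C ∧ 0 < C' ∧
      ∀ (n m k : ℕ) (A : Matrix (Fin n) (Fin m) ℝ) (μ M : ℝ) (σ : ℝ≥0),
        0 < m →
        0 ≤ μ →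
        (∀ i j, |(Aᵀ * A - 1 : Matrix (Fin m) (Fin m) ℝ) i j| ≤ μ) →
        (∀ j, ∑ i, (A i j) ^ 2 ≤ 1 + μ) →
        ∀ z : Fin m → ℝ, (∑ j, |z j|) ≤ M →
          (Finset.univ.filter fun j => z j ≠ 0).card ≤ k →
          ∀ w : Fin m → ℝ, (⨆ i, |w i|) = 1 →
          ENNReal.ofReal (1 - 1 / (m : ℝ)) ≤
            (Measure.pi fun _ : Fin n => gaussianReal 0 (σ ^ 2))
              {ξ : Fin n → ℝ |
                ((∑ i, w i *
                    (Real.sign (Aᵀ.mulVec (A.mulVec z + ξ) i) *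
                      max 0 (|Aᵀ.mulVec (A.mulVec z + ξ) i| -
                        C * ((σ : ℝ) * Real.sqrt ((1 + μ) * Real.log m) + μ * M)))) -
                  ∑ i, w i * z i) ^ 2 ≤
                  (k : ℝ) ^ 2 *
                    (⨆ i : Fin m,
                      |Real.sign (Aᵀ.mulVec (A.mulVec z + ξ) i) *
                        max 0 (|Aᵀ.mulVec (A.mulVec z + ξ) i| -
                          C * ((σ : ℝ) * Real.sqrt ((1 + μ) * Real.log m) + μ * M)) -
                        z i|) ^ 2 ∧
                ((∑ i, w i *
                    (Real.sign (Aᵀ.mulVec (A.mulVec z + ξ) i) *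
                      max 0 (|Aᵀ.mulVec (A.mulVec z + ξ) i| -
                        C * ((σ : ℝ) * Real.sqrt ((1 + μ) * Real.log m) + μ * M)))) -
                  ∑ i, w i * z i) ^ 2 ≤
                  C' * (k : ℝ) ^ 2 *
                    ((1 + μ) * (σ : ℝ) ^ 2 * Real.log m + μ ^ 2 * M ^ 2)} := by
  refine ⟨3, 72, by norm_num, by norm_num, ?_⟩
  intro n m k A μ M σ hm hμ hinc hcol z hz1 hcard w hw
  obtain rfl | hm2 : m = 1 ∨ 2 ≤ m := by omega
  · simp
  refine (one_sub_inv_le_measure_forall_abs_mulVec_le hm2 σ A hμ hcol).trans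
    (measure_mono fun ξ hξ => ?_)
  set τ := 3 * ((σ : ℝ) * Real.sqrt ((1 + μ) * Real.log m) + μ * M)
  have hM : 0 ≤ M := (Finset.sum_nonneg fun j _ => abs_nonneg (z j)).trans hz1
  have hτ : 0 ≤ τ := mul_nonneg zero_le_three (add_nonneg (by positivity) (mul_nonneg hμ hM))
  have hdev : ∀ j, |(Aᵀ *ᵥ (A *ᵥ z + ξ)) j - z j| ≤ τ := fun j =>
    (abs_transpose_mulVec_mulVec_add_apply_sub_le hinc z ξ j).trans <| by
      linarith [hξ j, mul_le_mul_of_nonneg_left hz1 hμ, mul_nonneg hμ hM]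
  have hw1 : ∀ i, |w i| ≤ 1 := fun i =>
    hw ▸ le_ciSup (f := fun i => |w i|) (Finite.bddAbove_range _) i
  have hsq := sq_sum_mul_softThreshold_sub_le hdev hw1 hcard
  have hT := iSup_abs_softThreshold_sub_le hτ hdev
  have hT0 := Real.iSup_nonneg fun i =>
    abs_nonneg (softThreshold τ ((Aᵀ *ᵥ (A *ᵥ z + ξ)) i) - z i)
  have h2τ : (2 * τ) ^ 2 ≤ 72 * ((1 + μ) * (σ : ℝ) ^ 2 * Real.log m + μ ^ 2 * M ^ 2) := by
    have hsqrt := Real.sq_sqrt (by positivity : 0 ≤ (1 + μ) * Real.log m)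
    nlinarith [sq_nonneg ((σ : ℝ) * Real.sqrt ((1 + μ) * Real.log m) - μ * M)]
  refine ⟨hsq, hsq.trans ?_⟩
  calc _ ≤ (k : ℝ) ^ 2 * (2 * τ) ^ 2 := by gcongr
    _ ≤ (k : ℝ) ^ 2 * (72 * ((1 + μ) * (σ : ℝ) ^ 2 * Real.log m + μ ^ 2 * M ^ 2)) := by
      gcongr
    _ = _ := by ring
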